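/- Let X be a finitely generated A_n-module whose underlying R_n-module is isomorphic to R_n^{⊕r} ⊕ R_{n-1}^{⊕s} for some non-negative integers r and s, and suppose that X/t^{n-1}X is projective as a module over A_{n-1}. Then there exist a finitely generated projective A_n-module Y and a surjective A_n-linear map ψ: Y → X whose kernel is annihilated by t. -/

import Mathlib

/-!
For `n ≤ 1` the element `t` vanishes in `R_n` and any finite free cover of `X` works. For `n ≥ 2`
put `c = t^{n-1} ∈ A_n`: it is central, nilpotent, and generates the kernel of `A_n → A_{n-1}`.
The projective `A_{n-1}`-module `X/t^{n-1}X` is the image of an idempotent matrix over `A_{n-1}`;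
idempotents lift along the nilpotent kernel, which yields a projective `A_n`-module `Y` (the image
of the lifted idempotent) with a surjection `Y → X/t^{n-1}X` whose kernel is `cY`. Lifting it to
`ψ : Y → X` by projectivity, `ψ` is surjective because `c` is nilpotent (Nakayama), and
`ker ψ ⊆ cY` is killed by `t` since `t c = t^n = 0`.
-/

open scoped TensorProduct DirectSum

noncomputable section

variable (S : Type) [CommRing S] [IsDomain S] [IsDiscreteValuationRing S]
variable (t : S)
variable (G : Type) [Group G] [Fintype G]

/-- `Rq n` is the quotient ring `R_n = S/(t^n)`. -/
abbrev Rq (n : ℕ) : Type := S ⧸ Ideal.span {t ^ n}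

/-- `Aq n` is the group algebra `A_n = R_n G`. -/
abbrev Aq (n : ℕ) : Type := MonoidAlgebra (Rq S t n) G

/-- The canonical surjection `R_n → R_i` for `i ≤ n`. -/
def Rmap (i n : ℕ) (h : i ≤ n) : Rq S t n →+* Rq S t i :=
  Ideal.Quotient.factor (Ideal.span_singleton_le_span_singleton.mpr (pow_dvd_pow t h))

/-- The canonical surjection `A_n → A_i` for `i ≤ n`, induced by `R_n → R_i`. -/
def Amap (i n : ℕ) (h : i ≤ n) : Aq S t G n →+* Aq S t G i :=
  letI : Algebra (Rq S t n) (Aq S t G i) :=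
    RingHom.toAlgebra' ((algebraMap (Rq S t i) (Aq S t G i)).comp (Rmap S t i n h))
      (fun r x => Algebra.commutes (Rmap S t i n h r) x)
  ((MonoidAlgebra.lift (Rq S t n) (Aq S t G i) G) (MonoidAlgebra.of (Rq S t i) G)).toRingHom

/-- The augmentation map `A_n → R_n`, `Σ r_g g ↦ Σ r_g`. -/
def aug (n : ℕ) : Aq S t G n →+* Rq S t n :=
  ((MonoidAlgebra.lift (Rq S t n) (Rq S t n) G) 1).toRingHom

/-- The image of `t` in `R_n`. -/
def tbar (n : ℕ) : Rq S t n := Ideal.Quotient.mk _ t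

/-- The norm element `Σ_{g ∈ G} g` of `A_n`. -/
def sigmaEl (n : ℕ) : Aq S t G n := ∑ g : G, MonoidAlgebra.of (Rq S t n) G g

/-- The element `t^{i-1} Σ_{g ∈ G} g` of `A_i`. -/
def wEl (i : ℕ) : Aq S t G i :=
  algebraMap (Rq S t i) (Aq S t G i) (tbar S t i ^ (i - 1)) * sigmaEl S t G i

/-- `W_i = A_i/⟨t^{i-1} Σ_{g∈G} g⟩`. -/
abbrev Wmod (i : ℕ) : Type :=
  Aq S t G i ⧸ Submodule.span (Aq S t G i) {wEl S t G i}

/-- The submodule `t^m X` of an `A_n`-module `X`. -/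
def tSub (n m : ℕ) (X : Type) [AddCommGroup X] [Module (Aq S t G n) X] :
    Submodule (Aq S t G n) X :=
  Submodule.span (Aq S t G n)
    (Set.range fun x : X => algebraMap (Rq S t n) (Aq S t G n) (tbar S t n ^ m) • x)


/-- A finitely generated projective `A_n`-module `Y` together with a surjective `A_n`-linear
map `ψ : Y → X` whose kernel is annihilated by `t`. -/
structure ProjCover (n : ℕ) (X : Type) [AddCommGroup X] [Module (Aq S t G n) X] :
    Type 1 where
  Y : Type
  [addY : AddCommGroup Y]
  [modY : Module (Aq S t G n) Y]
  finY : Module.Finite (Aq S t G n) Y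
  projY : Module.Projective (Aq S t G n) Y
  ψ : Y →ₗ[Aq S t G n] X
  surj : Function.Surjective ψ
  ker_ann : ∀ y ∈ LinearMap.ker ψ,
    algebraMap (Rq S t n) (Aq S t G n) (tbar S t n) • y = 0

open MonoidAlgebra

section MonoidAlgebra

variable {R R' M : Type*} [CommRing R] [CommRing R'] [Monoid M]

lemma MonoidAlgebra.ker_mapRingHom_le_span {f : R →+* R'} {τ : R}
    (hf : RingHom.ker f ≤ Ideal.span {τ}) :
    RingHom.ker (mapRingHom M f) ≤ Ideal.span {algebraMap R R[M] τ} := by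
  intro x hx
  have hcoeff : ∀ g, ∃ u, u * τ = x.coeff g := fun g => by
    rw [← Ideal.mem_span_singleton']
    apply hf
    rw [RingHom.mem_ker, ← coeff_mapRingHom, RingHom.mem_ker.mp hx, coeff_zero,
      Finsupp.coe_zero, Pi.zero_apply]
  choose u hu using hcoeff
  refine Ideal.mem_span_singleton'.mpr ⟨∑ g ∈ x.coeff.support, single g (u g), ?_⟩
  conv_rhs => rw [← sum_coeff_single x, Finsupp.sum]
  simp only [Finset.sum_mul, coe_algebraMap, Function.comp_apply, single_mul_single, mul_one,
    Algebra.algebraMap_self, RingHom.id_apply, hu]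

end MonoidAlgebra

section QuotientRings

variable {S : Type} [CommRing S] (t : S)

lemma tbar_pow_self (n : ℕ) : tbar S t n ^ n = 0 := by
  rw [tbar, ← map_pow, Ideal.Quotient.eq_zero_iff_mem]
  exact Ideal.mem_span_singleton_self _

lemma tbar_eq_zero_of_le_one {n : ℕ} (hn : n ≤ 1) : tbar S t n = 0 := by
  rw [tbar, Ideal.Quotient.eq_zero_iff_mem, Ideal.mem_span_singleton]
  simpa using pow_dvd_pow t hn

lemma Rmap_surjective (i n : ℕ) (h : i ≤ n) : Function.Surjective (Rmap S t i n h) :=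
  Ideal.Quotient.factor_surjective _

lemma ker_Rmap_le (i n : ℕ) (h : i ≤ n) :
    RingHom.ker (Rmap S t i n h) ≤ Ideal.span {tbar S t n ^ i} := by
  intro r hr
  obtain ⟨a, rfl⟩ := Ideal.Quotient.mk_surjective r
  rw [RingHom.mem_ker, Rmap, Ideal.Quotient.factor_mk, Ideal.Quotient.eq_zero_iff_mem,
    Ideal.mem_span_singleton] at hr
  obtain ⟨b, rfl⟩ := hr
  rw [tbar, ← map_pow, map_mul]
  exact Ideal.mul_mem_right _ _ (Ideal.mem_span_singleton_self _)

variable (G : Type) [Group G]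

lemma Amap_eq_mapRingHom (i n : ℕ) (h : i ≤ n) :
    Amap S t G i n h = mapRingHom G (Rmap S t i n h) := by
  ext <;>
    simp [Amap, Algebra.smul_def, RingHom.algebraMap_toAlgebra', MonoidAlgebra.coe_algebraMap]

lemma Amap_surjective (i n : ℕ) (h : i ≤ n) : Function.Surjective (Amap S t G i n h) := by
  rw [Amap_eq_mapRingHom, coe_mapRingHom]
  exact map_surjective _ (Rmap_surjective t i n h)

lemma ker_Amap_le (i n : ℕ) (h : i ≤ n) :
    RingHom.ker (Amap S t G i n h) ≤
      Ideal.span {algebraMap (Rq S t n) (Aq S t G n) (tbar S t n ^ i)} := by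
  rw [Amap_eq_mapRingHom]
  exact ker_mapRingHom_le_span (ker_Rmap_le t i n h)

end QuotientRings

section CentralNilpotentKernel

open Matrix

variable {A B : Type*} [Ring A] [Ring B] {f : A →+* B} {c : A}

lemma exists_eq_smul_of_mem_span_range_smul {M : Type*} [AddCommGroup M] [Module A M]
    (hc : ∀ a, Commute c a) {x : M} (hx : x ∈ Submodule.span A (Set.range (c • · : M → M))) :
    ∃ z, x = c • z := by
  induction hx using Submodule.span_induction with
  | mem x hx => exact hx.imp fun z hz => hz.symm
  | zero => exact ⟨0, (smul_zero c).symm⟩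
  | add x y _ _ hx hy =>
    obtain ⟨z, rfl⟩ := hx; obtain ⟨w, rfl⟩ := hy
    exact ⟨z + w, (smul_add c z w).symm⟩
  | smul a x _ hx =>
    obtain ⟨z, rfl⟩ := hx
    exact ⟨a • z, by rw [smul_smul, smul_smul, (hc a).eq]⟩

lemma Module.Finite.of_ringHom_smul_eq {P : Type*} [AddCommGroup P] [Module A P] [Module B P]
    (hP : ∀ (a : A) (x : P), f a • x = a • x) [Module.Finite A P] : Module.Finite B P := by
  obtain ⟨s, hs⟩ := Module.Finite.fg_top (R := A) (M := P)
  have hspan : ∀ x ∈ Submodule.span A (s : Set P), x ∈ Submodule.span B (s : Set P) := by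
    intro x hx
    induction hx using Submodule.span_induction with
    | mem x hx => exact Submodule.subset_span hx
    | zero => exact zero_mem _
    | add x y _ _ hx hy => exact add_mem hx hy
    | smul a x _ hx => exact hP a x ▸ Submodule.smul_mem _ _ hx
  exact ⟨⟨s, eq_top_iff.mpr fun x _ => hspan x (hs ▸ Submodule.mem_top)⟩⟩

lemma surjective_of_forall_eq_add_smul {M N : Type*} [AddCommGroup M] [Module A M]
    [AddCommGroup N] [Module A N] (hcn : IsNilpotent c)
    {ψ : M →ₗ[A] N} (hψ : ∀ x, ∃ y d, x = ψ y + c • d) : Function.Surjective ψ := by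
  have hpow : ∀ k x, ∃ y d, x = ψ y + c ^ k • d := by
    intro k
    induction k with
    | zero => exact fun x => ⟨0, x, by rw [map_zero, pow_zero, one_smul, zero_add]⟩
    | succ k ih =>
      intro x
      obtain ⟨y, d, rfl⟩ := ih x
      obtain ⟨y', d', rfl⟩ := hψ d
      refine ⟨y + c ^ k • y', d', ?_⟩
      rw [map_add, map_smul, smul_add, smul_smul, ← pow_succ, add_assoc]
  obtain ⟨k, hk⟩ := hcn
  intro x
  obtain ⟨y, d, rfl⟩ := hpow k x
  exact ⟨y, by rw [hk, zero_smul, add_zero]⟩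

lemma exists_eq_smul_of_comp_eq_zero (hker : RingHom.ker f ≤ Ideal.span {c})
    (hc : ∀ a, Commute c a) {ι : Type*} {v : ι → A} (hv : f ∘ v = 0) : ∃ w, v = c • w := by
  have hentry : ∀ j, ∃ b, b * c = v j := fun j =>
    Ideal.mem_span_singleton'.mp <| hker <| congr_fun hv j
  choose w hw using hentry
  exact ⟨w, funext fun j => by rw [← hw, Pi.smul_apply, smul_eq_mul, (hc _).eq]⟩

lemma isNilpotent_of_mapMatrix_eq_zero (hker : RingHom.ker f ≤ Ideal.span {c})
    (hc : ∀ a, Commute c a) (hcn : IsNilpotent c) {m : Type*} [Fintype m] [DecidableEq m]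
    {M : Matrix m m A} (hM : f.mapMatrix M = 0) : IsNilpotent M := by
  have hrow : ∀ i, ∃ w, M i = c • w := fun i =>
    exists_eq_smul_of_comp_eq_zero hker hc <| funext fun j => by simpa using congr_fun₂ hM i j
  choose W hW using hrow
  have hMW : M = Matrix.scalar m c * Matrix.of W := by
    ext i j
    simp [hW]
  obtain ⟨k, hk⟩ := hcn
  refine ⟨k, ?_⟩
  rw [hMW, (Matrix.scalar_commute c hc _).mul_pow, ← map_pow (Matrix.scalar m), hk, map_zero,
    zero_mul]

lemma exists_isIdempotentElem_mapMatrix_eq (hf : Function.Surjective f)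
    (hker : RingHom.ker f ≤ Ideal.span {c}) (hc : ∀ a, Commute c a) (hcn : IsNilpotent c)
    {m : Type*} [Fintype m] [DecidableEq m] {E : Matrix m m B} (hE : IsIdempotentElem E) :
    ∃ E' : Matrix m m A, IsIdempotentElem E' ∧ f.mapMatrix E' = E :=
  exists_isIdempotentElem_eq_of_ker_isNilpotent _
    (fun _ hM => isNilpotent_of_mapMatrix_eq_zero hker hc hcn (RingHom.mem_ker.mp hM)) E
    ⟨E.map (Function.surjInv hf), by ext; simp [Function.surjInv_eq hf]⟩ hE

lemma Module.Projective.exists_isIdempotentElem_matrix {P : Type*} [AddCommGroup P]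
    [Module B P] [Module.Finite B P] [Module.Projective B P] :
    ∃ (m : ℕ) (p : (Fin m → B) →ₗ[B] P) (E : Matrix (Fin m) (Fin m) B),
      Function.Surjective p ∧ IsIdempotentElem E ∧ (∀ w, p (w ᵥ* E) = p w) ∧
        ∀ w, p w = 0 → w ᵥ* E = 0 := by
  obtain ⟨m, p, hp⟩ := Module.Finite.exists_fin' B P
  obtain ⟨i, hi⟩ := Module.projective_lifting_property p LinearMap.id hp
  have hpi : ∀ x, p (i x) = x := LinearMap.congr_fun hi
  have hvecMul : ∀ w, w ᵥ* LinearMap.toMatrixRight' (i ∘ₗ p) = i (p w) := fun w => by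
    rw [← Matrix.toLinearMapRight'_apply, LinearEquiv.symm_apply_apply, LinearMap.comp_apply]
  refine ⟨m, p, LinearMap.toMatrixRight' (i ∘ₗ p), hp, ?_, fun w => ?_, fun w hw => ?_⟩
  · rw [IsIdempotentElem, ← LinearMap.toMatrixRight'_comp, LinearMap.comp_assoc,
      ← LinearMap.comp_assoc p i p, hi, LinearMap.id_comp]
  · rw [hvecMul, hpi]
  · rw [hvecMul, hw, map_zero]

theorem exists_projective_lift (hf : Function.Surjective f)
    (hker : RingHom.ker f ≤ Ideal.span {c}) (hc : ∀ a, Commute c a) (hcn : IsNilpotent c)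
    {P : Type*} [AddCommGroup P] [Module A P] [Module B P]
    (hP : ∀ (a : A) (x : P), f a • x = a • x) [Module.Finite B P] [Module.Projective B P] :
    ∃ (m : ℕ) (Y : Submodule A (Fin m → A)), Module.Finite A Y ∧ Module.Projective A Y ∧
      ∃ π : Y →ₗ[A] P, Function.Surjective π ∧ ∀ y, π y = 0 → ∃ z, y = c • z := by
  obtain ⟨m, p, E, hp, hE, hpE, hkerE⟩ :=
    Module.Projective.exists_isIdempotentElem_matrix (B := B) (P := P)
  obtain ⟨E', hE', rfl⟩ := exists_isIdempotentElem_mapMatrix_eq hf hker hc hcn hE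
  set ε := Matrix.toLinearMapRight' E'
  have hεε : ∀ v, ε (ε v) = ε v := fun v => by
    rw [← Matrix.toLinearMapRight'_mul_apply, hE'.eq]
  have hfix : ∀ y ∈ LinearMap.range ε, ε y = y := by
    rintro _ ⟨v, rfl⟩
    exact hεε v
  have hred : ∀ v, f ∘ ε v = (f ∘ v) ᵥ* f.mapMatrix E' := fun v =>
    funext (RingHom.map_vecMul f E' v)
  let red : (Fin m → A) →ₗ[A] P :=
    { toFun := fun v => p (f ∘ v)
      map_add' := fun v w => by rw [← map_add]; congr 1; ext; simp
      map_smul' := fun a v => by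
        rw [RingHom.id_apply, ← hP, ← map_smul]; congr 1; ext; simp }
  refine ⟨m, LinearMap.range ε, inferInstance,
    .of_split (LinearMap.range ε).subtype ε.rangeRestrict
      (LinearMap.ext fun y => Subtype.ext (hfix y y.2)),
    red ∘ₗ (LinearMap.range ε).subtype, fun x => ?_, fun ⟨y, hy⟩ hy0 => ?_⟩
  · obtain ⟨w, rfl⟩ := hp x
    obtain ⟨v, rfl⟩ := hf.comp_left w
    exact ⟨⟨ε v, LinearMap.mem_range_self ε v⟩, by
      show p (f ∘ ε v) = p (f ∘ v)
      rw [hred, hpE]⟩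
  · obtain ⟨w, hw⟩ : ∃ w, y = c • w := by
      refine exists_eq_smul_of_comp_eq_zero hker hc ?_
      rw [← hfix y hy, hred]
      exact hkerE _ hy0
    refine ⟨⟨ε w, LinearMap.mem_range_self ε w⟩, Subtype.ext ?_⟩
    rw [SetLike.val_smul, ← map_smul, ← hw, hfix y hy]

theorem exists_projective_cover_of_projective_quotient (hf : Function.Surjective f)
    (hker : RingHom.ker f ≤ Ideal.span {c}) (hc : ∀ a, Commute c a) (hcn : IsNilpotent c)
    {X : Type*} [AddCommGroup X] [Module A X]
    (N : Submodule A X) (hN : ∀ x ∈ N, ∃ z, x = c • z) [Module B (X ⧸ N)]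
    (hQ : ∀ (a : A) (q : X ⧸ N), f a • q = a • q) [Module.Finite B (X ⧸ N)]
    [Module.Projective B (X ⧸ N)] :
    ∃ (m : ℕ) (Y : Submodule A (Fin m → A)), Module.Finite A Y ∧ Module.Projective A Y ∧
      ∃ ψ : Y →ₗ[A] X, Function.Surjective ψ ∧ ∀ y, ψ y = 0 → ∃ z, y = c • z := by
  obtain ⟨m, Y, hYfin, hYproj, π, hπ, hπker⟩ := exists_projective_lift hf hker hc hcn hQ
  obtain ⟨ψ, hψ⟩ := Module.projective_lifting_property N.mkQ π N.mkQ_surjective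
  refine ⟨m, Y, hYfin, hYproj, ψ, surjective_of_forall_eq_add_smul hcn fun x => ?_,
    fun y hy => hπker y ?_⟩
  · obtain ⟨y, hy⟩ := hπ (N.mkQ x)
    obtain ⟨d, hd⟩ := hN _ <| (Submodule.Quotient.eq N).mp <|
      hy.symm.trans (LinearMap.congr_fun hψ y).symm
    exact ⟨y, d, by rw [← hd, add_sub_cancel]⟩
  · rw [← hψ, LinearMap.comp_apply, hy, map_zero]

end CentralNilpotentKernel

theorem statement9 (n : ℕ)
    (X : Type) [AddCommGroup X] [Module (Aq S t G n) X] [Module.Finite (Aq S t G n) X]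
    (hproj :
      ∃ inst : Module (Aq S t G (n - 1)) (X ⧸ tSub S t G n (n - 1) X),
        (∀ (a : Aq S t G n) (q : X ⧸ tSub S t G n (n - 1) X),
          letI := inst
          Amap S t G (n - 1) n (Nat.sub_le n 1) a • q = a • q) ∧
        letI := inst
        Module.Projective (Aq S t G (n - 1)) (X ⧸ tSub S t G n (n - 1) X)) :
    Nonempty (ProjCover S t G n X) := by
  rcases le_or_gt n 1 with hn | hn
  · obtain ⟨m, p, hp⟩ := Module.Finite.exists_fin' (Aq S t G n) X
    exact ⟨⟨Fin m → Aq S t G n, inferInstance, inferInstance, p, hp, fun y _ => by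
      rw [tbar_eq_zero_of_le_one t hn, map_zero, zero_smul]⟩⟩
  obtain ⟨_, hcompat, _⟩ := hproj
  have := Module.Finite.of_ringHom_smul_eq hcompat
  set c := algebraMap (Rq S t n) (Aq S t G n) (tbar S t n ^ (n - 1))
  have hc : ∀ a, Commute c a := Algebra.commutes _
  have hcn : IsNilpotent c := (IsNilpotent.pow_of_pos ⟨n, tbar_pow_self t n⟩ (by omega)).map _
  obtain ⟨m, Y, hYfin, hYproj, ψ, hψ, hker⟩ := exists_projective_cover_of_projective_quotient
    (Amap_surjective t G _ n _) (ker_Amap_le t G _ n _) hc hcn (tSub S t G n (n - 1) X)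
    (fun _ hx => exists_eq_smul_of_mem_span_range_smul hc hx) hcompat
  refine ⟨⟨Y, hYfin, hYproj, ψ, hψ, fun y hy => ?_⟩⟩
  obtain ⟨z, rfl⟩ := hker y hy
  rw [smul_smul, ← map_mul, ← pow_succ', Nat.sub_add_cancel hn.le, tbar_pow_self, map_zero,
    zero_smul]
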